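/- arXiv:0904.0806 — 2 statements merged into one kernel-verified Lean document; each statement's English description precedes it below -/
import Mathlib

section
/- Let f : [0,1] × ℝ³ → ℝ be a nonnegative measurable function with f ≤ F everywhere (F > 0), such that f(θ,v₁,v₂,v₃) = 0 whenever max(|v₂|,|v₃|) > X (X > 0), and suppose ∫₀¹ ∫_{ℝ³} f dv dθ = Q > 0. Then ∫₀¹ ∫_{ℝ³} f·|v₁| dv dθ ≥ Q²/(32 X² F). -/
open MeasureTheory

/-- Lower bound on the first absolute moment in `v₁` of a Vlasov distribution
with uniform bound `F`, momentum support `X` in `v₂, v₃`, and particle number `Q`. -/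
theorem stmt_0 (f : ℝ → (Fin 3 → ℝ) → ℝ) (F X Q : ℝ)
    (hF : 0 < F) (hX : 0 < X) (hQ : 0 < Q)
    (hmeas : Measurable (Function.uncurry f))
    (hnn : ∀ θ v, 0 ≤ f θ v)
    (hbd : ∀ θ v, f θ v ≤ F)
    (hsupp : ∀ θ (v : Fin 3 → ℝ), X < max |v 1| |v 2| → f θ v = 0)
    (hQint : ∫⁻ θ in Set.Icc (0:ℝ) 1, ∫⁻ v, ENNReal.ofReal (f θ v) = ENNReal.ofReal Q) :
    ENNReal.ofReal (Q ^ 2 / (32 * X ^ 2 * F)) ≤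
      ∫⁻ θ in Set.Icc (0:ℝ) 1, ∫⁻ v, ENNReal.ofReal (f θ v * |v 0|) := by
  set ε : ℝ := Q / (16 * X ^ 2 * F) with hε
  have hε0 : 0 < ε := by positivity
  set r : Fin 3 → ℝ := ![ε, X, X] with hr
  set B : Set (Fin 3 → ℝ) := Set.pi Set.univ (fun i => Set.Icc (-(r i)) (r i)) with hB
  have hBmeas : MeasurableSet B := MeasurableSet.univ_pi (fun i => measurableSet_Icc)
  have hεne : ENNReal.ofReal ε ≠ 0 := (ENNReal.ofReal_pos.mpr hε0).ne'
  have hεnt : ENNReal.ofReal ε ≠ ⊤ := ENNReal.ofReal_ne_top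
  set I : ENNReal := ∫⁻ θ in Set.Icc (0:ℝ) 1, ∫⁻ v, ENNReal.ofReal (f θ v * |v 0|) with hI
  -- pointwise bound
  have key : ∀ θ v, ENNReal.ofReal (f θ v) ≤
      B.indicator (fun _ => ENNReal.ofReal F) v
        + ENNReal.ofReal (f θ v * |v 0|) * (ENNReal.ofReal ε)⁻¹ := by
    intro θ v
    by_cases h0 : |v 0| ≤ ε
    · by_cases h12 : X < max |v 1| |v 2|
      · rw [hsupp θ v h12]; simp
      · push_neg at h12
        have hv1 : |v 1| ≤ X := le_trans (le_max_left _ _) h12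
        have hv2 : |v 2| ≤ X := le_trans (le_max_right _ _) h12
        have hvB : v ∈ B := by
          intro i _
          fin_cases i
          · exact Set.mem_Icc.mpr (abs_le.mp h0)
          · exact Set.mem_Icc.mpr (abs_le.mp hv1)
          · exact Set.mem_Icc.mpr (abs_le.mp hv2)
        rw [Set.indicator_of_mem hvB]
        exact le_add_right (ENNReal.ofReal_le_ofReal (hbd θ v))
    · push_neg at h0
      have h1 : ENNReal.ofReal (f θ v) * ENNReal.ofReal ε ≤ ENNReal.ofReal (f θ v * |v 0|) := by
        rw [← ENNReal.ofReal_mul (hnn θ v)]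
        exact ENNReal.ofReal_le_ofReal (by nlinarith [hnn θ v])
      have h2 := (ENNReal.le_div_iff_mul_le (Or.inl hεne) (Or.inl hεnt)).mpr h1
      rw [div_eq_mul_inv] at h2
      exact le_add_left h2
  -- volume of the box
  have hvolB : volume B = ENNReal.ofReal (8 * ε * X ^ 2) := by
    rw [hB, volume_pi_pi]
    rw [Fin.prod_univ_three]
    simp only [hr, Matrix.cons_val_zero, Matrix.cons_val_one, Matrix.head_cons,
      Matrix.cons_val_two, Matrix.tail_cons, Real.volume_Icc]
    rw [← ENNReal.ofReal_mul (by linarith), ← ENNReal.ofReal_mul (by nlinarith)]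
    ring_nf
  have hFB : ENNReal.ofReal F * volume B = ENNReal.ofReal (Q / 2) := by
    rw [hvolB, ← ENNReal.ofReal_mul hF.le]
    congr 1
    rw [hε]
    field_simp
    ring
  -- inner bound
  have inner : ∀ θ, ∫⁻ v, ENNReal.ofReal (f θ v) ≤
      ENNReal.ofReal (Q / 2) + (∫⁻ v, ENNReal.ofReal (f θ v * |v 0|)) * (ENNReal.ofReal ε)⁻¹ := by
    intro θ
    calc ∫⁻ v, ENNReal.ofReal (f θ v)
        ≤ ∫⁻ v, (B.indicator (fun _ => ENNReal.ofReal F) v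
            + ENNReal.ofReal (f θ v * |v 0|) * (ENNReal.ofReal ε)⁻¹) :=
          lintegral_mono (key θ)
      _ = (∫⁻ v, B.indicator (fun _ => ENNReal.ofReal F) v)
            + ∫⁻ v, ENNReal.ofReal (f θ v * |v 0|) * (ENNReal.ofReal ε)⁻¹ :=
          lintegral_add_left (measurable_const.indicator hBmeas) _
      _ = ENNReal.ofReal (Q / 2)
            + (∫⁻ v, ENNReal.ofReal (f θ v * |v 0|)) * (ENNReal.ofReal ε)⁻¹ := by
          rw [lintegral_indicator hBmeas, setLIntegral_const,
            lintegral_mul_const' _ _ (ENNReal.inv_ne_top.mpr hεne), hFB]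
  -- outer bound
  have outer : ENNReal.ofReal Q ≤ ENNReal.ofReal (Q / 2) + I * (ENNReal.ofReal ε)⁻¹ := by
    rw [← hQint]
    calc ∫⁻ θ in Set.Icc (0:ℝ) 1, ∫⁻ v, ENNReal.ofReal (f θ v)
        ≤ ∫⁻ θ in Set.Icc (0:ℝ) 1,
            (ENNReal.ofReal (Q / 2)
              + (∫⁻ v, ENNReal.ofReal (f θ v * |v 0|)) * (ENNReal.ofReal ε)⁻¹) :=
          lintegral_mono (fun θ => inner θ)
      _ = ENNReal.ofReal (Q / 2) + I * (ENNReal.ofReal ε)⁻¹ := by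
          rw [lintegral_add_left measurable_const _, setLIntegral_const,
            lintegral_mul_const' _ _ (ENNReal.inv_ne_top.mpr hεne), ← hI,
            Real.volume_Icc]
          norm_num
  have hhalf : ENNReal.ofReal (Q / 2) ≤ I * (ENNReal.ofReal ε)⁻¹ := by
    have hQsplit : ENNReal.ofReal Q = ENNReal.ofReal (Q / 2) + ENNReal.ofReal (Q / 2) := by
      rw [← ENNReal.ofReal_add (by linarith) (by linarith)]; norm_num
    rw [hQsplit] at outer
    exact (ENNReal.add_le_add_iff_left ENNReal.ofReal_ne_top).mp outer
  rw [← div_eq_mul_inv] at hhalf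
  have := (ENNReal.le_div_iff_mul_le (Or.inl hεne) (Or.inl hεnt)).mp hhalf
  calc ENNReal.ofReal (Q ^ 2 / (32 * X ^ 2 * F))
      = ENNReal.ofReal (Q / 2) * ENNReal.ofReal ε := by
        rw [← ENNReal.ofReal_mul (by linarith)]
        congr 1
        rw [hε]; field_simp; ring
    _ ≤ I := this
end

section
/- Let t_f < t_i be reals and α : (t_f, t_i] × [0,1] → ℝ be continuous, nondecreasing as t decreases (i.e., α(t,θ) ≥ α(t',θ) whenever t ≤ t'), and suppose there is M > 0 such that min_{θ∈[0,1]} α(t,θ) ≤ M for all t ∈ (t_f, t_i]. Then there exists θ̄ ∈ [0,1] such that α(t, θ̄) ≤ 2M for all t ∈ (t_f, t_i] — in particular the function t ↦ α(t,θ̄) is bounded. -/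
/-- If a continuous function on `(t_f, t_i] × [0,1]`, nondecreasing toward the past,
has spatial minimum bounded by `M`, then it is bounded by `2M` along some fixed `θ̄`. -/
theorem stmt_3 (tf ti M : ℝ) (α : ℝ → ℝ → ℝ)
    (htfi : tf < ti) (hM : 0 < M)
    (hcont : ContinuousOn (fun p : ℝ × ℝ => α p.1 p.2)
      (Set.Ioc tf ti ×ˢ Set.Icc (0:ℝ) 1))
    (hmono : ∀ θ ∈ Set.Icc (0:ℝ) 1, ∀ t ∈ Set.Ioc tf ti, ∀ t' ∈ Set.Ioc tf ti,
      t ≤ t' → α t' θ ≤ α t θ)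
    (hmin : ∀ t ∈ Set.Ioc tf ti, ∃ θ ∈ Set.Icc (0:ℝ) 1, α t θ ≤ M) :
    ∃ θbar ∈ Set.Icc (0:ℝ) 1, ∀ t ∈ Set.Ioc tf ti, α t θbar ≤ 2 * M := by
  by_contra h
  push_neg at h
  choose tθ htθ hgt using fun θ (hθ : θ ∈ Set.Icc (0:ℝ) 1) => h θ hθ
  have key : ∀ θ (hθ : θ ∈ Set.Icc (0:ℝ) 1), ∃ W : Set ℝ, IsOpen W ∧ θ ∈ W ∧
      ∀ θ' ∈ W ∩ Set.Icc (0:ℝ) 1, 2*M < α (tθ θ hθ) θ' := by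
    intro θ hθ
    have hc : ContinuousOn (fun θ' => α (tθ θ hθ) θ') (Set.Icc (0:ℝ) 1) := by
      have hmap : ContinuousOn (fun θ' : ℝ => ((tθ θ hθ, θ') : ℝ × ℝ)) (Set.Icc 0 1) :=
        (continuous_const.prodMk continuous_id).continuousOn
      exact hcont.comp hmap (fun θ' hθ' => ⟨htθ θ hθ, hθ'⟩)
    have hmem : (fun θ' => α (tθ θ hθ) θ') ⁻¹' Set.Ioi (2*M) ∈ nhdsWithin θ (Set.Icc 0 1) :=
      hc θ hθ (Ioi_mem_nhds (hgt θ hθ))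
    rw [mem_nhdsWithin] at hmem
    obtain ⟨W, hWo, hθW, hWsub⟩ := hmem
    exact ⟨W, hWo, hθW, fun θ' hθ' => hWsub hθ'⟩
  choose W hWo hθW hWsub using key
  obtain ⟨F, hF⟩ := isCompact_Icc.elim_nhds_subcover' W
    (fun θ hθ => (hWo θ hθ).mem_nhds (hθW θ hθ))
  have h0 : (0:ℝ) ∈ Set.Icc (0:ℝ) 1 := by constructor <;> norm_num
  have hFne : F.Nonempty := by
    obtain ⟨x, hx⟩ := Set.mem_iUnion.mp (hF h0)
    obtain ⟨hxF, _⟩ := Set.mem_iUnion.mp hx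
    exact ⟨x, hxF⟩
  set tstar := F.inf' hFne (fun x => tθ x.1 x.2) with htstar
  have htsmem : tstar ∈ Set.Ioc tf ti := by
    constructor
    · rw [htstar, Finset.lt_inf'_iff]
      exact fun x hx => (htθ x.1 x.2).1
    · obtain ⟨x, hx⟩ := hFne
      exact le_trans (Finset.inf'_le _ hx) (htθ x.1 x.2).2
  obtain ⟨θ0, hθ0, hθ0M⟩ := hmin tstar htsmem
  obtain ⟨x, hx⟩ := Set.mem_iUnion.mp (hF hθ0)
  obtain ⟨hxF, hθ0W⟩ := Set.mem_iUnion.mp hx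
  have h1 : 2*M < α (tθ x.1 x.2) θ0 := hWsub x.1 x.2 θ0 ⟨hθ0W, hθ0⟩
  have h2 : α (tθ x.1 x.2) θ0 ≤ α tstar θ0 :=
    hmono θ0 hθ0 tstar htsmem (tθ x.1 x.2) (htθ x.1 x.2) (Finset.inf'_le _ hxF)
  linarith
end
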